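/- Define 𝓕 = {x ∈ [0,1] : ∀ n ≥ 1, |B sin(π 3^{n−1} x)| ≤ 1} with B = 2/√3. Then 𝓕 equals the middle-thirds Cantor set. -/

import Mathlib

/-!
Since `2 / √3 = 1 / sin (π / 3)`, the conditions read `|sin (π 3ᵐ x)| ≤ sin (π / 3)` for all `m`.
For `x ∈ [0, 1]` the one with `m = 0` says `x ∈ [0, 1/3] ∪ [2/3, 1]`, i.e. `3x ∈ [0, 1]` or
`3x - 2 ∈ [0, 1]`; as `sin (π ·)` is `2`-periodic, the conditions with `m ≥ 1` for `x` are those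
with `m - 1` for `3x`, and also for `3x - 2`. By induction, the points satisfying the conditions for
`m < n` form the `n`-th stage `preCantorSet n` of the middle-thirds construction, whose
intersection is the set of ternary numbers with digits `0` and `2` (`cantorSet_eq_zero_two_ofDigits`).
-/

open Real

/-- The middle-thirds Cantor set: points admitting a ternary expansion with
digits in `{0,2}`. -/
noncomputable def cantorMiddleThirds : Set ℝ :=
  {x : ℝ | ∃ d : ℕ → Fin 3, (∀ n, d n ≠ 1) ∧ x = ∑' n : ℕ, (d n : ℝ) / 3 ^ (n + 1)}

lemma sin_pi_mul_le_sin_pi_div_three_iff {t : ℝ} (h0 : 0 ≤ t) (h1 : t ≤ 1 / 2) :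
    sin (π * t) ≤ sin (π / 3) ↔ t ≤ 1 / 3 := by
  have hπ := pi_pos
  rw [strictMonoOn_sin.le_iff_le ⟨by nlinarith, by nlinarith⟩ ⟨by linarith, by linarith⟩]
  constructor <;> intro h <;> nlinarith

lemma abs_sin_pi_mul_le_iff {t : ℝ} (ht : t ∈ Set.Icc (0 : ℝ) 1) :
    |sin (π * t)| ≤ √3 / 2 ↔ t ≤ 1 / 3 ∨ 2 / 3 ≤ t := by
  obtain ⟨h0, h1⟩ := ht
  rw [abs_of_nonneg (sin_nonneg_of_nonneg_of_le_pi (by positivity) (by nlinarith [pi_pos])),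
    ← sin_pi_div_three]
  rcases le_total t (1 / 2) with h | h
  · rw [sin_pi_mul_le_sin_pi_div_three_iff h0 h]
    constructor
    · exact Or.inl
    · rintro (h' | h') <;> [exact h'; linarith]
  · rw [← sin_pi_sub, show π - π * t = π * (1 - t) by ring,
      sin_pi_mul_le_sin_pi_div_three_iff (by linarith) (by linarith)]
    constructor
    · intro h'; right; linarith
    · rintro (h' | h') <;> linarith

lemma mem_Icc_and_abs_sin_pi_mul_le_iff {x : ℝ} :
    x ∈ Set.Icc (0 : ℝ) 1 ∧ |sin (π * x)| ≤ √3 / 2 ↔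
      3 * x ∈ Set.Icc (0 : ℝ) 1 ∨ 3 * x - 2 ∈ Set.Icc (0 : ℝ) 1 := by
  constructor
  · rintro ⟨hx, h⟩
    rcases (abs_sin_pi_mul_le_iff hx).1 h with h | h <;> [left; right] <;>
      constructor <;> linarith [hx.1, hx.2]
  · intro h
    have hx : x ∈ Set.Icc (0 : ℝ) 1 := by
      rcases h with ⟨_, _⟩ | ⟨_, _⟩ <;> constructor <;> linarith
    refine ⟨hx, (abs_sin_pi_mul_le_iff hx).2 ?_⟩
    rcases h with ⟨_, _⟩ | ⟨_, _⟩ <;> [left; right] <;> linarith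

lemma sin_pi_mul_pow_three_mul_sub_two (m : ℕ) (x : ℝ) :
    sin (π * 3 ^ m * (3 * x - 2)) = sin (π * 3 ^ (m + 1) * x) := by
  rw [show π * 3 ^ m * (3 * x - 2) = π * 3 ^ (m + 1) * x - (3 ^ m : ℕ) * (2 * π) by
    push_cast; ring, sin_sub_nat_mul_two_pi]

lemma mem_preCantorSet_succ_iff (n : ℕ) (x : ℝ) :
    x ∈ preCantorSet (n + 1) ↔ 3 * x ∈ preCantorSet n ∨ 3 * x - 2 ∈ preCantorSet n := by
  simp only [preCantorSet_succ, Set.mem_union, Set.mem_image]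
  refine or_congr ⟨?_, fun h => ⟨_, h, by ring⟩⟩ ⟨?_, fun h => ⟨_, h, by ring⟩⟩ <;>
    rintro ⟨y, hy, rfl⟩ <;> convert hy using 1 <;> ring

lemma mem_preCantorSet_iff (n : ℕ) (x : ℝ) :
    x ∈ preCantorSet n ↔
      x ∈ Set.Icc (0 : ℝ) 1 ∧ ∀ m < n, |sin (π * 3 ^ m * x)| ≤ √3 / 2 := by
  induction n generalizing x with
  | zero => simp
  | succ n ih =>
    have hmul (m : ℕ) : π * 3 ^ m * (3 * x) = π * 3 ^ (m + 1) * x := by ring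
    rw [mem_preCantorSet_succ_iff, ih, ih, Nat.forall_lt_succ_left]
    simp only [hmul, sin_pi_mul_pow_three_mul_sub_two, ← or_and_right, pow_zero, mul_one,
      ← and_assoc]
    exact and_congr_left fun _ => mem_Icc_and_abs_sin_pi_mul_le_iff.symm

lemma mem_cantorSet_iff (x : ℝ) :
    x ∈ cantorSet ↔ x ∈ Set.Icc (0 : ℝ) 1 ∧ ∀ m : ℕ, |sin (π * 3 ^ m * x)| ≤ √3 / 2 := by
  simp only [cantorSet, Set.mem_iInter, mem_preCantorSet_iff]
  exact ⟨fun h => ⟨(h 0).1, fun m => (h (m + 1)).2 m m.lt_succ_self⟩,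
    fun h n => ⟨h.1, fun m _ => h.2 m⟩⟩

lemma cantorMiddleThirds_eq_cantorSet : cantorMiddleThirds = cantorSet := by
  rw [cantorSet_eq_zero_two_ofDigits]
  ext x
  simp [cantorMiddleThirds, ofDigits, ofDigitsTerm, div_eq_mul_inv, eq_comm (a := x)]

lemma abs_two_div_sqrt_three_mul_le_one_iff (s : ℝ) :
    |2 / √3 * s| ≤ 1 ↔ |s| ≤ √3 / 2 := by
  have h3 : (0 : ℝ) < √3 := by positivity
  rw [abs_mul, abs_of_pos (by positivity : (0 : ℝ) < 2 / √3), div_mul_eq_mul_div,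
    div_le_one h3, le_div_iff₀ (by norm_num : (0 : ℝ) < 2), mul_comm]

/-- The set of points of `[0,1]` satisfying `|B sin(π 3^(n-1) x)| ≤ 1` for all
`n ≥ 1`, with `B = 2/√3`, equals the middle-thirds Cantor set. -/
theorem stmt_13 :
    {x : ℝ | x ∈ Set.Icc (0 : ℝ) 1 ∧
        ∀ n : ℕ, 1 ≤ n → |(2 / Real.sqrt 3) * Real.sin (π * 3 ^ (n - 1) * x)| ≤ 1}
      = cantorMiddleThirds := by
  ext x
  rw [cantorMiddleThirds_eq_cantorSet, mem_cantorSet_iff]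
  simp only [Set.mem_ofPred_eq, abs_two_div_sqrt_three_mul_le_one_iff]
  refine and_congr_right fun _ => ⟨fun h m => by simpa using h (m + 1) (by omega), fun h n _ => h _⟩
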